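/- If A is an alternative MDG R-algebra (meaning [a,a,b] = 0 for all a, b in A), then [a₁,a₂,a₃] = 0 for all homogeneous a₁, a₂, a₃ with |a₁| and |a₃| odd. -/

import Mathlib

/-- `(-1)^n` as an integer, for `n : ℤ`. -/
def sgn (n : ℤ) : ℤ := ((Int.negOnePow n : ℤˣ) : ℤ)

/-- An MDG `R`-algebra: a ℤ-graded `R`-complex `M` centered data, with a chain-map
multiplication which is unital and strictly graded-commutative, but not
necessarily associative. -/
structure MDGAlg (R : Type*) (M : Type*) [CommRing R] [AddCommGroup M] [Module R M] where
  grading : ℤ → Submodule R M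
  internal : DirectSum.IsInternal grading
  mul : M →ₗ[R] M →ₗ[R] M
  d : M →ₗ[R] M
  one : M
  one_mem : one ∈ grading 0
  mul_mem : ∀ {i j : ℤ} {a b : M}, a ∈ grading i → b ∈ grading j → mul a b ∈ grading (i + j)
  d_mem : ∀ {i : ℤ} {a : M}, a ∈ grading i → d a ∈ grading (i - 1)
  d_sq : ∀ a : M, d (d a) = 0
  one_mul : ∀ a : M, mul one a = a
  mul_one : ∀ a : M, mul a one = a
  gcomm : ∀ {i j : ℤ} {a b : M}, a ∈ grading i → b ∈ grading j →
    mul a b = sgn (i * j) • mul b a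
  odd_sq : ∀ {i : ℤ} {a : M}, Odd i → a ∈ grading i → mul a a = 0
  leibniz : ∀ {i : ℤ} {a : M}, a ∈ grading i → ∀ b : M,
    d (mul a b) = mul (d a) b + sgn i • mul a (d b)

/-- An MDG module over an MDG algebra: unital and graded-commutative, not
necessarily associative.  Both the left and the right `A`-scalar multiplication
are recorded; graded-commutativity ties them together. -/
structure MDGMod (R M X : Type*) [CommRing R] [AddCommGroup M] [Module R M]
    [AddCommGroup X] [Module R X] (A : MDGAlg R M) where
  grading : ℤ → Submodule R X
  internal : DirectSum.IsInternal grading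
  smul : M →ₗ[R] X →ₗ[R] X
  smulR : X →ₗ[R] M →ₗ[R] X
  d : X →ₗ[R] X
  smul_mem : ∀ {i j : ℤ} {a : M} {x : X}, a ∈ A.grading i → x ∈ grading j →
    smul a x ∈ grading (i + j)
  d_mem : ∀ {i : ℤ} {x : X}, x ∈ grading i → d x ∈ grading (i - 1)
  d_sq : ∀ x : X, d (d x) = 0
  one_smul : ∀ x : X, smul A.one x = x
  smul_one : ∀ x : X, smulR x A.one = x
  gcomm : ∀ {i j : ℤ} {a : M} {x : X}, a ∈ A.grading i → x ∈ grading j →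
    smul a x = sgn (i * j) • smulR x a
  leibniz : ∀ {i : ℤ} {a : M}, a ∈ A.grading i → ∀ x : X,
    d (smul a x) = smul (A.d a) x + sgn i • smul a (d x)

section Defs

variable {R M X Y : Type*} [CommRing R] [AddCommGroup M] [Module R M]
  [AddCommGroup X] [Module R X] [AddCommGroup Y] [Module R Y]

/-- The associator `[a,b,c] = (ab)c - a(bc)` of an MDG algebra. -/
def ascA (A : MDGAlg R M) (a b c : M) : M :=
  A.mul (A.mul a b) c - A.mul a (A.mul b c)

/-- The associator `[a,b,x] = (ab)x - a(bx)` of an MDG module. -/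
def ascAAX {A : MDGAlg R M} (Xm : MDGMod R M X A) (a b : M) (x : X) : X :=
  Xm.smul (A.mul a b) x - Xm.smul a (Xm.smul b x)

/-- The associator `[x,a,b] = (xa)b - x(ab)`. -/
def ascXAA {A : MDGAlg R M} (Xm : MDGMod R M X A) (x : X) (a b : M) : X :=
  Xm.smulR (Xm.smulR x a) b - Xm.smulR x (A.mul a b)

/-- The associator `[a,x,b] = (ax)b - a(xb)`. -/
def ascAXA {A : MDGAlg R M} (Xm : MDGMod R M X A) (a : M) (x : X) (b : M) : X :=
  Xm.smulR (Xm.smul a x) b - Xm.smul a (Xm.smulR x b)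

/-- The multiplicator `[a,x]_φ = φ(ax) - aφ(x)` of a chain map `φ : X → Y`. -/
def multc {A : MDGAlg R M} (Xm : MDGMod R M X A) (Ym : MDGMod R M Y A)
    (φ : X →ₗ[R] Y) (a : M) (x : X) : Y :=
  φ (Xm.smul a x) - Ym.smul a (φ x)

/-- The right-sided multiplicator `[x,a]_φ = φ(xa) - φ(x)a`. -/
def multcR {A : MDGAlg R M} (Xm : MDGMod R M X A) (Ym : MDGMod R M Y A)
    (φ : X →ₗ[R] Y) (x : X) (a : M) : Y :=
  φ (Xm.smulR x a) - Ym.smulR (φ x) a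

/-- The associator `A`-submodule `⟨X⟩`: the smallest submodule of `X` containing
all associators and closed under the `A`-action and the differential. -/
def assocSub {A : MDGAlg R M} (Xm : MDGMod R M X A) : Submodule R X :=
  sInf {S : Submodule R X |
    (∀ (a : M) (x : X), x ∈ S → Xm.smul a x ∈ S) ∧
    (∀ x ∈ S, Xm.d x ∈ S) ∧
    ∀ (a b : M) (x : X), ascAAX Xm a b x ∈ S}

/-- The associator ideal `⟨A⟩` of an MDG algebra. -/
def assocIdeal (A : MDGAlg R M) : Submodule R M :=
  sInf {S : Submodule R M |
    (∀ (a : M) (x : M), x ∈ S → A.mul a x ∈ S) ∧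
    (∀ x ∈ S, A.d x ∈ S) ∧
    ∀ a b c : M, ascA A a b c ∈ S}

end Defs

/-!
Linearizing `[a,a,b] = 0` gives `[a,b,c] = -[b,a,c]`. For odd `a₁, a₃` we have `a₃a₁ = -a₁a₃`, so the
`(a₁a₃)a₂` terms of `[a₁,a₃,a₂] + [a₃,a₁,a₂] = 0` cancel and leave `a₁(a₃a₂) = -a₃(a₁a₂)`. Moving `a₃`
to the right of `a₁a₂` and of `a₂` by graded commutativity costs the signs `(-1)^{(|a₁|+|a₂|)|a₃|}` and
`(-1)^{|a₂||a₃|}`, which differ by exactly `-1`; hence `(a₁a₂)a₃ = a₁(a₂a₃)`.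
-/

lemma sgn_of_odd {n : ℤ} (h : Odd n) : sgn n = -1 := by
  rw [sgn, Int.negOnePow_odd _ h, Units.val_neg, Units.val_one]

lemma sgn_add (m n : ℤ) : sgn (m + n) = sgn m * sgn n := by
  simp only [sgn, Int.negOnePow_add, Units.val_mul]

namespace MDGAlg

variable {R M : Type*} [CommRing R] [AddCommGroup M] [Module R M] (A : MDGAlg R M)

lemma ascA_add_left (a b c d : M) : ascA A (a + b) c d = ascA A a c d + ascA A b c d := by
  simp only [ascA, map_add, LinearMap.add_apply]
  abel

lemma ascA_add_middle (a b c d : M) : ascA A a (b + c) d = ascA A a b d + ascA A a c d := by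
  simp only [ascA, map_add, LinearMap.add_apply]
  abel

lemma ascA_add_ascA_swap_of_alternative (halt : ∀ a b : M, ascA A a a b = 0) (a b c : M) :
    ascA A a b c + ascA A b a c = 0 := by
  have h := halt (a + b) c
  rw [ascA_add_left, ascA_add_middle, ascA_add_middle, halt, halt] at h
  rw [← h]
  abel

lemma mul_neg_comm_of_odd {i j : ℤ} {a b : M} (ha : a ∈ A.grading i) (hb : b ∈ A.grading j)
    (hi : Odd i) (hj : Odd j) : A.mul a b = -A.mul b a := by
  rw [A.gcomm ha hb, sgn_of_odd (hi.mul hj), neg_one_smul]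

lemma mul_mul_add_mul_mul_eq_zero_of_alternative (halt : ∀ a b : M, ascA A a a b = 0)
    {a b : M} (hab : A.mul b a = -A.mul a b) (c : M) :
    A.mul a (A.mul b c) + A.mul b (A.mul a c) = 0 := by
  have h := A.ascA_add_ascA_swap_of_alternative halt a b c
  rw [ascA, ascA, hab, map_neg, LinearMap.neg_apply] at h
  rw [← neg_eq_zero, ← h]
  abel

end MDGAlg

/-- In an alternative MDG algebra, `[a₁,a₂,a₃] = 0` whenever `|a₁|` and `|a₃|`
are odd. -/
theorem stmt7 {R M : Type*} [CommRing R] [AddCommGroup M] [Module R M]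
    (A : MDGAlg R M) (halt : ∀ a b : M, ascA A a a b = 0)
    {i j k : ℤ} {a₁ a₂ a₃ : M}
    (h₁ : a₁ ∈ A.grading i) (h₂ : a₂ ∈ A.grading j) (h₃ : a₃ ∈ A.grading k)
    (hi : Odd i) (hk : Odd k) :
    ascA A a₁ a₂ a₃ = 0 := by
  have hcancel : A.mul a₃ (A.mul a₁ a₂) = -A.mul a₁ (A.mul a₃ a₂) :=
    eq_neg_of_add_eq_zero_right <| A.mul_mul_add_mul_mul_eq_zero_of_alternative halt
      (A.mul_neg_comm_of_odd h₃ h₁ hk hi) a₂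
  have hsign : sgn ((i + j) * k) = -sgn (j * k) := by
    rw [add_mul, sgn_add, sgn_of_odd (hi.mul hk), neg_one_mul]
  rw [ascA, sub_eq_zero, A.gcomm (A.mul_mem h₁ h₂) h₃, A.gcomm h₂ h₃, map_zsmul, hcancel, hsign,
    smul_neg, neg_smul, neg_neg]
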